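/- arXiv:1603.06255 — 5 statements merged into one kernel-verified Lean document; each statement's English description precedes it below -/
import Mathlib

section
/- Let Φ be an ergodic OQW on k sites with degree of freedom n. Then the series ∑_{r≥1}(Φ̂^r − Ω̂) converges absolutely, the linear map Id − Φ̂ + Ω̂ on block vectors is invertible, and its inverse equals Id + ∑_{r≥1}(Φ̂^r − Ω̂). -/
open Matrix Filter

noncomputable section

abbrev Mn (n : ℕ) : Type := Matrix (Fin n) (Fin n) ℂ

abbrev BlockVec (n k : ℕ) : Type := Fin k → Mn n

/-- An open quantum random walk on `k` sites with degree of freedom `n`: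
`∑ i, (B i j)ᴴ (B i j) = 1` for every `j`. -/
def IsOQW {n k : ℕ} (B : Fin k → Fin k → Mn n) : Prop :=
  ∀ j : Fin k, ∑ i : Fin k, (B i j)ᴴ * B i j = 1

/-- The block representation `Φ̂`: `(Φ̂ ρ) i = ∑ j, B i j * ρ j * (B i j)ᴴ`. -/
def blockRep {n k : ℕ} (B : Fin k → Fin k → Mn n) : Module.End ℂ (BlockVec n k) :=
  LinearMap.pi fun i => ∑ j : Fin k,
    (LinearMap.mulRight ℂ (B i j)ᴴ).comp ((LinearMap.mulLeft ℂ (B i j)).comp (LinearMap.proj j))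

/-- The map `Ω̂`: `(Ω̂ ρ) p = (1/(k n)) (∑ j, Tr (ρ j)) • 1` for every `p`. -/
def omegaMap (n k : ℕ) : Module.End ℂ (BlockVec n k) :=
  LinearMap.pi fun _ =>
    (LinearMap.toSpanSingleton ℂ (Mn n) (((k : ℂ) * (n : ℂ))⁻¹ • (1 : Mn n))).comp
      (∑ j : Fin k, (Matrix.traceLinearMap (Fin n) ℂ ℂ).comp (LinearMap.proj j))

/-- Ergodic OQW: the iterates of the block representation converge to `Ω̂`. -/
def IsErgodic {n k : ℕ} (B : Fin k → Fin k → Mn n) : Prop :=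
  ∀ ρ : BlockVec n k,
    Tendsto (fun r : ℕ => (blockRep B ^ r) ρ) atTop (nhds (omegaMap n k ρ))

/-! Write `Q = Φ̂ - Ω̂`. Passing to the limit in `Φ̂^(r+1) = Φ̂ Φ̂^r = Φ̂^r Φ̂` gives
`Φ̂ Ω̂ = Ω̂ Φ̂ = Ω̂ = Ω̂²`, hence `Q^(r+1) = Φ̂^(r+1) - Ω̂`, and ergodicity says that `Q^r → 0`
pointwise, so in operator norm since the space of block vectors is finite-dimensional. Then
`‖Q^N‖ < 1` for some `N`, the series `∑ ‖Q^r‖` is dominated by a geometric one, and the Neumann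
series `∑ Q^r` inverts `1 - Q = Id - Φ̂ + Ω̂`. -/

open Topology

section NeumannSeries

variable {R : Type*} [Ring R] [TopologicalSpace R] [IsTopologicalRing R] [T2Space R] {x : R}

theorem Summable.isUnit_one_sub (h : Summable (x ^ ·)) : IsUnit (1 - x) :=
  ⟨⟨1 - x, ∑' r, x ^ r, h.one_sub_mul_tsum_pow, h.tsum_pow_mul_one_sub⟩, rfl⟩

theorem Summable.ringInverse_one_sub (h : Summable (x ^ ·)) :
    Ring.inverse (1 - x) = ∑' r, x ^ r :=
  Ring.inverse_unit ⟨1 - x, ∑' r, x ^ r, h.one_sub_mul_tsum_pow, h.tsum_pow_mul_one_sub⟩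

end NeumannSeries

theorem map_ringInverse {M N F : Type*} [MonoidWithZero M] [MonoidWithZero N] [EquivLike F M N]
    [MulEquivClass F M N] (f : F) (a : M) : f (Ring.inverse a) = Ring.inverse (f a) := by
  by_cases ha : IsUnit a
  · obtain ⟨u, rfl⟩ := ha
    have := Ring.inverse_unit (Units.map (f : M →* N) u)
    simp only [Units.coe_map, Units.coe_map_inv, MonoidHom.coe_coe] at this
    rw [Ring.inverse_unit]
    exact this.symm
  · rw [Ring.inverse_non_unit a ha, map_zero, Ring.inverse_non_unit _ (by rwa [isUnit_map_iff])]

section PowerBound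

variable {A : Type*} [SeminormedRing A]

theorem norm_pow_mul_le (a b : A) (q : ℕ) : ‖a ^ q * b‖ ≤ ‖a‖ ^ q * ‖b‖ := by
  induction q with
  | zero => rw [pow_zero, pow_zero, one_mul, one_mul]
  | succ q ih =>
    calc ‖a ^ (q + 1) * b‖ = ‖a * (a ^ q * b)‖ := by rw [pow_succ', mul_assoc]
      _ ≤ ‖a‖ * (‖a‖ ^ q * ‖b‖) := (norm_mul_le _ _).trans (by gcongr)
      _ = ‖a‖ ^ (q + 1) * ‖b‖ := by ring

theorem summable_norm_pow_of_norm_pow_lt_one {x : A} {N : ℕ} (hN : 0 < N) (hx : ‖x ^ N‖ < 1) :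
    Summable (‖x ^ ·‖) := by
  have : NeZero N := ⟨hN.ne'⟩
  have hgeom : Summable (‖x ^ N‖ ^ ·) := summable_geometric_of_lt_one (norm_nonneg _) hx
  have hbound : Summable fun p : ℕ × Fin N => ‖x ^ N‖ ^ p.1 * ‖x ^ (p.2 : ℕ)‖ :=
    hgeom.mul_of_nonneg (g := fun s : Fin N => ‖x ^ (s : ℕ)‖) Summable.of_finite
      (fun _ => pow_nonneg (norm_nonneg _) _) (fun _ => norm_nonneg _)
  refine (Nat.divModEquiv N).symm.summable_iff.1
    (hbound.of_nonneg_of_le (fun _ => norm_nonneg _) fun ⟨q, s⟩ => ?_)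
  calc ‖x ^ (q * N + s)‖ = ‖(x ^ N) ^ q * x ^ (s : ℕ)‖ := by rw [pow_add, mul_comm q N, pow_mul]
    _ ≤ ‖x ^ N‖ ^ q * ‖x ^ (s : ℕ)‖ := norm_pow_mul_le _ _ _

theorem summable_norm_pow_of_tendsto_pow_zero {x : A} (h : Tendsto (x ^ ·) atTop (𝓝 0)) :
    Summable (‖x ^ ·‖) := by
  obtain ⟨N, hlt, hN⟩ := ((tendsto_zero_iff_norm_tendsto_zero.1 h).eventually
    (gt_mem_nhds one_pos)).and (eventually_gt_atTop 0) |>.exists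
  exact summable_norm_pow_of_norm_pow_lt_one hN hlt

end PowerBound

theorem sub_pow_succ_of_mul_eq {R : Type*} [Ring R] {p e : R} (hpe : p * e = e) (hep : e * p = e)
    (he : IsIdempotentElem e) (r : ℕ) : (p - e) ^ (r + 1) = p ^ (r + 1) - e := by
  have hpow : ∀ m : ℕ, p ^ m * e = e := fun m => by
    induction m with
    | zero => rw [pow_zero, one_mul]
    | succ m ih => rw [pow_succ, mul_assoc, hpe, ih]
  induction r with
  | zero => rw [zero_add, pow_one, pow_one]
  | succ r ih => rw [pow_succ, ih, sub_mul, mul_sub, mul_sub, ← pow_succ, hpow, hep, he.eq]; abel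

namespace ContinuousLinearMap

theorem tendsto_zero_of_tendsto_apply_zero {𝕜 E F ι : Type*}
    [NontriviallyNormedField 𝕜] [CompleteSpace 𝕜] [NormedAddCommGroup E] [NormedSpace 𝕜 E]
    [FiniteDimensional 𝕜 E] [NormedAddCommGroup F] [NormedSpace 𝕜 F] {l : Filter ι}
    {T : ι → E →L[𝕜] F} (h : ∀ x, Tendsto (T · x) l (𝓝 0)) : Tendsto T l (𝓝 0) := by
  let b := Module.finBasis 𝕜 E
  obtain ⟨C, -, hC⟩ := b.exists_opNorm_le (F := F)
  have hsum : Tendsto (fun t => C * ∑ i, ‖T t (b i)‖) l (𝓝 0) := by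
    simpa using (tendsto_finsetSum Finset.univ fun i _ => (h (b i)).norm).const_mul C
  refine squeeze_zero_norm (fun t => hC (by positivity) fun i => ?_) hsum
  exact Finset.single_le_sum (f := fun i => ‖T t (b i)‖) (fun _ _ => norm_nonneg _)
    (Finset.mem_univ i)

section Limit

variable {R E : Type*} [Semiring R] [TopologicalSpace E] [T2Space E] [AddCommMonoid E] [Module R E]
  {P Ω : E →L[R] E}

theorem mul_eq_right_of_tendsto_pow_apply
    (h : ∀ x, Tendsto (fun r : ℕ => (P ^ r) x) atTop (𝓝 (Ω x))) : P * Ω = Ω := by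
  ext x
  refine tendsto_nhds_unique ((P.continuous.tendsto _).comp (h x)) ?_
  refine ((h x).comp (tendsto_add_atTop_nat 1)).congr fun r => ?_
  rw [Function.comp_apply, pow_succ']
  rfl

theorem mul_eq_left_of_tendsto_pow_apply
    (h : ∀ x, Tendsto (fun r : ℕ => (P ^ r) x) atTop (𝓝 (Ω x))) : Ω * P = Ω := by
  ext x
  refine tendsto_nhds_unique (h (P x)) ?_
  refine ((h x).comp (tendsto_add_atTop_nat 1)).congr fun r => ?_
  rw [Function.comp_apply, pow_succ]
  rfl

theorem isIdempotentElem_of_tendsto_pow_apply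
    (h : ∀ x, Tendsto (fun r : ℕ => (P ^ r) x) atTop (𝓝 (Ω x))) : IsIdempotentElem Ω := by
  ext x
  refine tendsto_nhds_unique ((Ω.continuous.tendsto _).comp (h x)) (tendsto_const_nhds.congr ?_)
  intro r
  have hΩP : Ω * P ^ r = Ω := by
    induction r with
    | zero => rw [pow_zero, mul_one]
    | succ r ih => rw [pow_succ, ← mul_assoc, ih, mul_eq_left_of_tendsto_pow_apply h]
  exact (congrArg (· x) hΩP).symm

end Limit

theorem sub_pow_succ_of_tendsto_pow_apply {R E : Type*} [Ring R] [TopologicalSpace E] [T2Space E]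
    [AddCommGroup E] [Module R E] [IsTopologicalAddGroup E] {P Ω : E →L[R] E}
    (h : ∀ x, Tendsto (fun r : ℕ => (P ^ r) x) atTop (𝓝 (Ω x))) (r : ℕ) :
    (P - Ω) ^ (r + 1) = P ^ (r + 1) - Ω :=
  sub_pow_succ_of_mul_eq (mul_eq_right_of_tendsto_pow_apply h)
    (mul_eq_left_of_tendsto_pow_apply h) (isIdempotentElem_of_tendsto_pow_apply h) r

theorem tendsto_sub_pow_of_tendsto_pow_apply {𝕜 E : Type*} [NontriviallyNormedField 𝕜]
    [CompleteSpace 𝕜] [NormedAddCommGroup E] [NormedSpace 𝕜 E] [FiniteDimensional 𝕜 E]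
    {P Ω : E →L[𝕜] E} (h : ∀ x, Tendsto (fun r : ℕ => (P ^ r) x) atTop (𝓝 (Ω x))) :
    Tendsto ((P - Ω) ^ ·) atTop (𝓝 0) := by
  refine (tendsto_add_atTop_iff_nat 1).1 (tendsto_zero_of_tendsto_apply_zero fun x => ?_)
  have hx := ((h x).sub_const (Ω x)).comp (tendsto_add_atTop_nat 1)
  rw [sub_self] at hx
  refine hx.congr fun r => ?_
  rw [sub_pow_succ_of_tendsto_pow_apply h]
  rfl

end ContinuousLinearMap

theorem Module.End.fundamentalMatrix_of_tendsto_pow_apply {𝕜 E : Type*}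
    [NontriviallyNormedField 𝕜] [CompleteSpace 𝕜] [NormedAddCommGroup E] [NormedSpace 𝕜 E]
    [FiniteDimensional 𝕜 E] {P Ω : Module.End 𝕜 E}
    (h : ∀ x, Tendsto (fun r : ℕ => (P ^ r) x) atTop (𝓝 (Ω x))) :
    (∀ x, Summable fun r : ℕ => ‖(P ^ (r + 1)) x - Ω x‖) ∧ IsUnit (1 - P + Ω) ∧
    ∀ x, Ring.inverse (1 - P + Ω) x = x + ∑' r : ℕ, ((P ^ (r + 1)) x - Ω x) := by
  have : CompleteSpace E := FiniteDimensional.complete 𝕜 E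
  let e := Module.End.toContinuousLinearMap (𝕜 := 𝕜) E
  have hlim : ∀ x, Tendsto (fun r : ℕ => (e P ^ r) x) atTop (𝓝 (e Ω x)) := fun x => by
    simp_rw [← map_pow]
    exact h x
  set Q := e P - e Ω
  have hQ : ∀ x r, (P ^ (r + 1)) x - Ω x = (Q ^ (r + 1)) x := fun x r => by
    rw [ContinuousLinearMap.sub_pow_succ_of_tendsto_pow_apply hlim, ← map_pow]
    rfl
  have hsum : Summable (‖Q ^ ·‖) := summable_norm_pow_of_tendsto_pow_zero
    (ContinuousLinearMap.tendsto_sub_pow_of_tendsto_pow_apply hlim)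
  have hco : 1 - P + Ω = e.symm (1 - Q) := by simp [Q, sub_add]
  refine ⟨fun x => ?_, hco ▸ hsum.of_norm.isUnit_one_sub.map e.symm, fun x => ?_⟩
  · refine (((summable_nat_add_iff 1).2 hsum).mul_right ‖x‖).of_nonneg_of_le
      (fun _ => norm_nonneg _) fun r => ?_
    rw [hQ]
    exact (Q ^ (r + 1)).le_opNorm x
  · have hS : HasSum (fun r => (Q ^ r) x) ((∑' r, Q ^ r) x) :=
      hsum.of_norm.hasSum.mapL (ContinuousLinearMap.apply 𝕜 _ x)
    rw [hco, ← map_ringInverse, hsum.of_norm.ringInverse_one_sub]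
    change (∑' r, Q ^ r) x = _
    rw [← hS.tsum_eq, hS.summable.tsum_eq_zero_add]
    simp only [hQ, pow_zero]
    rfl

-- The entrywise sup norm on matrices induces the product topology in which `IsErgodic` is stated.
attribute [local instance] Matrix.normedAddCommGroup Matrix.normedSpace

theorem fundamentalMatrix_exists_general {n k : ℕ}
    (B : Fin k → Fin k → Mn n) (herg : IsErgodic B) :
    (∀ (ρ : BlockVec n k) (i : Fin k) (a b : Fin n),
      Summable fun r : ℕ =>
        ‖((blockRep B ^ (r + 1)) ρ i - omegaMap n k ρ i) a b‖) ∧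
    IsUnit (1 - blockRep B + omegaMap n k) ∧
    ∀ ρ : BlockVec n k,
      Ring.inverse (1 - blockRep B + omegaMap n k) ρ =
        ρ + ∑' r : ℕ, ((blockRep B ^ (r + 1)) ρ - omegaMap n k ρ) := by
  obtain ⟨hsum, hunit, hinv⟩ := Module.End.fundamentalMatrix_of_tendsto_pow_apply herg
  refine ⟨fun ρ i a b => (hsum ρ).of_nonneg_of_le (fun _ => norm_nonneg _) fun r => ?_, hunit, hinv⟩
  exact (norm_entry_le_entrywise_sup_norm _).trans
    (norm_le_pi_norm ((blockRep B ^ (r + 1)) ρ - omegaMap n k ρ) i)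

/-- For an ergodic OQW, the series `∑_{r ≥ 1} (Φ̂^r - Ω̂)` converges absolutely
(entrywise), the map `Id - Φ̂ + Ω̂` is invertible, and its inverse equals
`Id + ∑_{r ≥ 1} (Φ̂^r - Ω̂)`. -/
theorem fundamentalMatrix_exists {n k : ℕ} (hn : 1 ≤ n) (hk : 1 ≤ k)
    (B : Fin k → Fin k → Mn n) (hB : IsOQW B) (herg : IsErgodic B) :
    (∀ (ρ : BlockVec n k) (i : Fin k) (a b : Fin n),
      Summable fun r : ℕ =>
        ‖((blockRep B ^ (r + 1)) ρ i - omegaMap n k ρ i) a b‖) ∧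
    IsUnit (1 - blockRep B + omegaMap n k) ∧
    ∀ ρ : BlockVec n k,
      Ring.inverse (1 - blockRep B + omegaMap n k) ρ =
        ρ + ∑' r : ℕ, ((blockRep B ^ (r + 1)) ρ - omegaMap n k ρ) :=
  fundamentalMatrix_exists_general B herg
end
end

section
/- Let R be a (not necessarily commutative) unital ring, k ≥ 1, and let Φ, Ω, Z, K be k×k matrices over R such that: ΦΩ = ΩΦ = Ω, Ω² = Ω, all entries of Ω are equal (Ω_{ij} = Ω_{11} for all i,j), and Z(I − Φ + Ω) = (I − Φ + Ω)Z = I. Let D be the diagonal part of K, N := K − D, and L := K − NΦ. Then for all i,j: N_{ij} = (DZ)_{ii} − (DZ)_{ij} + (LZ)_{ij} − (LZ)_{ii}. -/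
/-!
Since `ΩΦ = Ω` and `Ω² = Ω`, we have `Ω(I - Φ + Ω) = Ω`, hence `ΩZ = Ω` and
`(I - Φ)Z = I - Ω`. Writing `K = D + N` this gives `LZ = DZ + N - NΩ`.
Comparing the `(i, j)` and `(i, i)` entries, `N_{ii} = 0` and, because `Ω` has constant rows,
`(NΩ)_{ij} = (NΩ)_{ii}`.
-/

open Matrix

section FundamentalMatrix

variable {A : Type*} [Ring A] {Φ Ω Z : A}

theorem mul_fundamental_eq_self (hΩΦ : Ω * Φ = Ω) (hΩ : IsIdempotentElem Ω)
    (hZ : (1 - Φ + Ω) * Z = 1) : Ω * Z = Ω := by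
  have hΩ_eigen : Ω * (1 - Φ + Ω) = Ω := by
    rw [mul_add, mul_sub, mul_one, hΩΦ, hΩ.eq, sub_self, zero_add]
  calc Ω * Z = Ω * (1 - Φ + Ω) * Z := by rw [hΩ_eigen]
    _ = Ω := by rw [mul_assoc, hZ, mul_one]

theorem one_sub_mul_fundamental (hΩΦ : Ω * Φ = Ω) (hΩ : IsIdempotentElem Ω)
    (hZ : (1 - Φ + Ω) * Z = 1) : (1 - Φ) * Z = 1 - Ω := by
  rw [eq_sub_iff_add_eq, ← mul_fundamental_eq_self hΩΦ hΩ hZ, ← add_mul, hZ]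

theorem sub_mul_mul_fundamental (hΩΦ : Ω * Φ = Ω) (hΩ : IsIdempotentElem Ω)
    (hZ : (1 - Φ + Ω) * Z = 1) (K N : A) :
    (K - N * Φ) * Z = (K - N) * Z + (N - N * Ω) := by
  have hNZ : N * ((1 - Φ) * Z) = N - N * Ω := by
    rw [one_sub_mul_fundamental hΩΦ hΩ hZ, mul_sub, mul_one]
  rw [← hNZ]
  noncomm_ring

end FundamentalMatrix

theorem Matrix.mul_apply_eq_of_col_eq {l m n R : Type*} [Fintype m] [NonUnitalNonAssocSemiring R]
    (N : Matrix l m R) {Ω : Matrix m n R} {j j' : n} (h : ∀ t, Ω t j = Ω t j') (i : l) :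
    (N * Ω) i j = (N * Ω) i j' := by
  simp only [mul_apply, h]

theorem Matrix.sub_diagonal_diag_apply_self {n R : Type*} [DecidableEq n] [AddGroup R]
    (K : Matrix n n R) (i : n) : (K - diagonal fun t => K t t) i i = 0 := by
  rw [sub_apply, diagonal_apply_eq, sub_self]

theorem mean_hitting_block_identity_general {R : Type*} [Ring R] {k : ℕ}
    (Φ Ω Z K : Matrix (Fin k) (Fin k) R)
    (h2 : Ω * Φ = Ω) (h3 : Ω * Ω = Ω)
    (h4 : ∀ i j i' j' : Fin k, Ω i j = Ω i' j')
    (h6 : (1 - Φ + Ω) * Z = 1) :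
    ∀ i j : Fin k,
      (K - Matrix.diagonal fun t => K t t) i j =
        ((Matrix.diagonal fun t => K t t) * Z) i i -
        ((Matrix.diagonal fun t => K t t) * Z) i j +
        (((K - (K - Matrix.diagonal fun t => K t t) * Φ) * Z) i j -
         ((K - (K - Matrix.diagonal fun t => K t t) * Φ) * Z) i i) := by
  intro i j
  set D := Matrix.diagonal fun t => K t t
  set N := K - D
  have hLZ : (K - N * Φ) * Z = D * Z + (N - N * Ω) := by
    rw [sub_mul_mul_fundamental h2 h3 h6 K N, sub_sub_cancel]
  have hNΩ : (N * Ω) i j = (N * Ω) i i := N.mul_apply_eq_of_col_eq (fun t => h4 t j t i) i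
  have hN : N i i = 0 := K.sub_diagonal_diag_apply_self i
  rw [hLZ, Matrix.add_apply, Matrix.add_apply, Matrix.sub_apply, Matrix.sub_apply, hNΩ, hN]
  abel

/-- The block-matrix identity underlying the Mean Hitting Time Formula for OQWs
(Lemma 5.2).  `R` is a unital ring; `Φ, Ω, Z, K` are `k × k` matrices over `R` with
`ΦΩ = ΩΦ = Ω`, `Ω² = Ω`, all entries of `Ω` equal, and `Z` a two-sided inverse of
`I - Φ + Ω`.  With `D` the diagonal part of `K`, `N := K - D` and `L := K - NΦ`,
one has `N_{ij} = (DZ)_{ii} - (DZ)_{ij} + (LZ)_{ij} - (LZ)_{ii}`. -/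
theorem mean_hitting_block_identity {R : Type*} [Ring R] {k : ℕ} (hk : 1 ≤ k)
    (Φ Ω Z K : Matrix (Fin k) (Fin k) R)
    (h1 : Φ * Ω = Ω) (h2 : Ω * Φ = Ω) (h3 : Ω * Ω = Ω)
    (h4 : ∀ i j i' j' : Fin k, Ω i j = Ω i' j')
    (h5 : Z * (1 - Φ + Ω) = 1) (h6 : (1 - Φ + Ω) * Z = 1) :
    ∀ i j : Fin k,
      (K - Matrix.diagonal fun t => K t t) i j =
        ((Matrix.diagonal fun t => K t t) * Z) i i -
        ((Matrix.diagonal fun t => K t t) * Z) i j +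
        (((K - (K - Matrix.diagonal fun t => K t t) * Φ) * Z) i j -
         ((K - (K - Matrix.diagonal fun t => K t t) * Φ) * Z) i i) :=
  mean_hitting_block_identity_general Φ Ω Z K h2 h3 h4 h6
end

section
/- Let Φ be an OQW on k sites with degree of freedom n whose mean hitting/return time series all converge absolutely and for which every hitting probability is one, i.e. h_{il}(σ) = Tr σ for all sites i ≠ l and all positive semidefinite σ. Then for all sites i, j and every positive semidefinite ρ ∈ M_n(ℂ): Tr(k̂_{ij}(ρ)) = Tr(ρ) + ∑_{l ≠ i} Tr(k̂_{il}((B l j) ρ (B l j)ᴴ)). Equivalently, writing K̂ = (k̂_{ij}), D̂ = diag(k̂_{11},…,k̂_{kk}) and L̂ := K̂ − (K̂ − D̂)Φ̂, one has Tr(L̂_{ij}(cρ)) = c·Tr(ρ) for all i, j, all c ∈ ℝ and all positive semidefinite ρ. -/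
open Matrix Filter
open scoped ComplexOrder

noncomputable section

/-- The product `B (x r) (x (r-1)) * ⋯ * B (x 1) (x 0)` along a path `x`. -/
def pathProd {n k : ℕ} (B : Fin k → Fin k → Mn n) : (r : ℕ) → (Fin (r+1) → Fin k) → Mn n
  | 0, _ => 1
  | r+1, x => B (x (Fin.last (r+1))) (x (Fin.last r).castSucc) *
      pathProd B r (fun s => x s.castSucc)

/-- The index set of `π(i ← j; r)`: paths `x_0 = j, x_1, …, x_r = i` with `x_s ≠ i`
for `1 ≤ s ≤ r - 1`. -/
def pathsSet (k : ℕ) (i j : Fin k) (r : ℕ) : Finset (Fin (r+1) → Fin k) :=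
  Finset.univ.filter fun x => x 0 = j ∧ x (Fin.last r) = i ∧
    ∀ s : Fin (r+1), s ≠ 0 → s ≠ Fin.last r → x s ≠ i

/-- The mean hitting time operator `k̂_{ij}(X) = ∑_{r ≥ 1} r ∑_{C ∈ π(i←j;r)} C X Cᴴ`
(mean return time operator when `i = j`). -/
def khat {n k : ℕ} (B : Fin k → Fin k → Mn n) (i j : Fin k) (X : Mn n) : Mn n :=
  ∑' r : ℕ, ((r + 1 : ℕ) : ℂ) • ∑ x ∈ pathsSet k i j (r+1),
    pathProd B (r+1) x * X * (pathProd B (r+1) x)ᴴ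

/-- The hitting probability `h_{ij}(σ) = ∑_{r ≥ 1} ∑_{C ∈ π(i←j;r)} Tr(C σ Cᴴ)`. -/
def hitSum {n k : ℕ} (B : Fin k → Fin k → Mn n) (i j : Fin k) (σ : Mn n) : ℂ :=
  ∑' r : ℕ, ∑ x ∈ pathsSet k i j (r+1),
    (pathProd B (r+1) x * σ * (pathProd B (r+1) x)ᴴ).trace

/-- The `(i,j)` block of an operator on block vectors. -/
def blockOf {n k : ℕ} (T : Module.End ℂ (BlockVec n k)) (i j : Fin k) (X : Mn n) : Mn n :=
  T (Pi.single j X) i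

/-!
Split a first-passage path `j = x₀, x₁, …, x_r = i` at its first step `j → l`. Either `l = i`
and `r = 1`, contributing `σ_i`, or `l ≠ i` and `x₁, …, x_r` is a first-passage path from `l`
to `i` of length `r - 1`, applied to `σ_l`, where `σ_l = B l j ρ (B l j)ᴴ`. Writing the weight
`r` as `(r - 1) + 1` gives
`k̂_{ij}(ρ) = σ_i + ∑_{l ≠ i} (k̂_{il}(σ_l) + ∑_{r ≥ 1} ∑_{C ∈ π(i←l;r)} C σ_l Cᴴ)`.
On traces the inner series is the hitting probability `h_{il}(σ_l) = Tr σ_l`, and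
`∑_l Tr σ_l = Tr ρ` because `∑_l (B l j)ᴴ B l j = 1`. The second identity follows from the
first because `k̂` is linear.
-/

theorem Matrix.trace_tsum {ι m R : Type*} [Fintype m] [AddCommMonoid R] [TopologicalSpace R]
    [ContinuousAdd R] [T2Space R] {F : ι → Matrix m m R} (hF : Summable F) :
    (∑' r, F r).trace = ∑' r, (F r).trace :=
  hF.map_tsum (traceAddMonoidHom m R) continuous_id.matrix_trace

theorem Matrix.summable_of_summable_norm_apply {ι m m' E : Type*} [NormedAddCommGroup E]
    [CompleteSpace E] {F : ι → Matrix m m' E} (h : ∀ a b, Summable fun r => ‖F r a b‖) :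
    Summable F :=
  Pi.summable.2 fun a => Pi.summable.2 fun b => (h a b).of_norm

section FirstStep

variable {n k : ℕ} (B : Fin k → Fin k → Mn n)

theorem pathProd_cons (j : Fin k) :
    ∀ (r : ℕ) (y : Fin (r + 1) → Fin k),
      pathProd B (r + 1) (Fin.cons j y) = pathProd B r y * B (y 0) j
  | 0, y => by simp [pathProd]
  | r + 1, y => by
    have hinit : (fun s : Fin (r + 2) => (Fin.cons j y : Fin (r + 3) → Fin k) s.castSucc) =
        Fin.cons j (fun s => y s.castSucc) := by
      funext s; cases s using Fin.cases <;> simp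
    have hprev : (Fin.last (r + 1)).castSucc = (Fin.last r).castSucc.succ := rfl
    rw [pathProd, hinit, pathProd_cons j r, pathProd, ← mul_assoc, hprev]
    simp

theorem pathsSet_one (i j : Fin k) :
    pathsSet k i j 1 = {Fin.cons j fun _ => i} := by
  ext x
  simp only [pathsSet, Finset.mem_filter, Finset.mem_univ, true_and, Finset.mem_singleton]
  constructor
  · rintro ⟨h0, h1, -⟩
    funext s
    fin_cases s
    · simpa using h0
    · simpa using h1
  · rintro rfl
    refine ⟨rfl, rfl, fun s hs0 hs1 => ?_⟩
    fin_cases s <;> simp_all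

theorem apply_zero_of_mem_pathsSet {i j : Fin k} {r : ℕ} {x : Fin (r + 1) → Fin k}
    (hx : x ∈ pathsSet k i j r) : x 0 = j :=
  (Finset.mem_filter.1 hx).2.1

theorem cons_mem_pathsSet_iff {i j l : Fin k} {m : ℕ} {y : Fin (m + 2) → Fin k} :
    Fin.cons j y ∈ pathsSet k i l (m + 2) ↔ j = l ∧ y 0 ≠ i ∧ y ∈ pathsSet k i (y 0) (m + 1) := by
  simp only [pathsSet, Finset.mem_filter, Finset.mem_univ, true_and]
  rw [Fin.forall_fin_succ]
  simp only [Fin.cons_zero, Fin.cons_succ, ← Fin.succ_last, ne_eq, Fin.succ_ne_zero,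
    not_false_eq_true, Fin.succ_inj, forall_const, not_true_eq_false, false_implies, true_and,
    and_congr_right_iff]
  rintro -
  constructor
  · rintro ⟨hlast, hmid⟩
    exact ⟨hmid 0 (Fin.succ_ne_zero _).symm, hlast, fun s _ hs => hmid s hs⟩
  · rintro ⟨h0, hlast, hmid⟩
    refine ⟨hlast, fun s hs => ?_⟩
    rcases eq_or_ne s 0 with rfl | hs0
    · exact h0
    · exact hmid s hs0 hs

theorem pathsSet_succ_succ (i j : Fin k) (m : ℕ) :
    pathsSet k i j (m + 2) = (Finset.univ.erase i).biUnion
      fun l => (pathsSet k i l (m + 1)).image (Fin.cons j) := by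
  ext x
  cases x using Fin.consCases with | cons x0 y => ?_
  simp only [cons_mem_pathsSet_iff, Finset.mem_biUnion, Finset.mem_erase, Finset.mem_image,
    Fin.cons_inj]
  constructor
  · rintro ⟨rfl, hy0, hy⟩
    exact ⟨y 0, ⟨hy0, Finset.mem_univ _⟩, y, hy, rfl, rfl⟩
  · rintro ⟨l, ⟨hl, -⟩, y, hy, rfl, rfl⟩
    rw [apply_zero_of_mem_pathsSet hy]
    exact ⟨rfl, hl, hy⟩

def pathSum (i j : Fin k) (r : ℕ) (X : Mn n) : Mn n :=
  ∑ x ∈ pathsSet k i j r, pathProd B r x * X * (pathProd B r x)ᴴ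

theorem khat_eq_tsum (i j : Fin k) (X : Mn n) :
    khat B i j X = ∑' r : ℕ, ((r + 1 : ℕ) : ℂ) • pathSum B i j (r + 1) X :=
  rfl

theorem hitSum_eq_tsum (i j : Fin k) (σ : Mn n) :
    hitSum B i j σ = ∑' r : ℕ, (pathSum B i j (r + 1) σ).trace :=
  tsum_congr fun _ => (trace_sum _ _).symm

theorem pathSum_one (i j : Fin k) (X : Mn n) :
    pathSum B i j 1 X = B i j * X * (B i j)ᴴ := by
  simp [pathSum, pathsSet_one, pathProd]

theorem pathSum_succ_succ (i j : Fin k) (m : ℕ) (X : Mn n) :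
    pathSum B i j (m + 2) X =
      ∑ l ∈ Finset.univ.erase i, pathSum B i l (m + 1) (B l j * X * (B l j)ᴴ) := by
  unfold pathSum
  rw [pathsSet_succ_succ, Finset.sum_biUnion]
  · refine Finset.sum_congr rfl fun l _ => ?_
    rw [Finset.sum_image fun _ _ _ _ h => Fin.cons_right_injective (α := fun _ => Fin k) j h]
    refine Finset.sum_congr rfl fun y hy => ?_
    rw [pathProd_cons, apply_zero_of_mem_pathsSet hy]
    simp only [conjTranspose_mul, mul_assoc]
  · intro l _ l' _ hne
    simp only [Function.onFun, Finset.disjoint_left, Finset.mem_image]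
    rintro _ ⟨y, hy, rfl⟩ ⟨y', hy', hyy'⟩
    rw [Fin.cons_right_injective (α := fun _ => Fin k) j hyy'] at hy'
    exact hne ((apply_zero_of_mem_pathsSet hy).symm.trans (apply_zero_of_mem_pathsSet hy'))

theorem pathSum_smul (i j : Fin k) (r : ℕ) (c : ℂ) (X : Mn n) :
    pathSum B i j r (c • X) = c • pathSum B i j r X := by
  simp only [pathSum, Finset.smul_sum, mul_smul_comm, smul_mul_assoc]

theorem khat_smul (i j : Fin k) (c : ℂ) (X : Mn n) :
    khat B i j (c • X) = c • khat B i j X := by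
  simp_rw [khat_eq_tsum, pathSum_smul, smul_comm _ c]
  exact tsum_const_smul'' c

def MeanHittingSummable : Prop :=
  ∀ (i j : Fin k) (X : Mn n) (a b : Fin n),
    Summable fun r : ℕ => ((r + 1 : ℕ) : ℝ) * ‖pathSum B i j (r + 1) X a b‖

variable {B}

theorem MeanHittingSummable.summable_smul (h : MeanHittingSummable B) (i j : Fin k) (X : Mn n) :
    Summable fun r : ℕ => ((r + 1 : ℕ) : ℂ) • pathSum B i j (r + 1) X :=
  Matrix.summable_of_summable_norm_apply fun a b => by
    simpa only [Matrix.smul_apply, norm_smul, Complex.norm_natCast] using h i j X a b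

theorem MeanHittingSummable.summable (h : MeanHittingSummable B) (i j : Fin k) (X : Mn n) :
    Summable fun r : ℕ => pathSum B i j (r + 1) X :=
  Matrix.summable_of_summable_norm_apply fun a b =>
    (h i j X a b).of_nonneg_of_le (fun _ => norm_nonneg _) fun r =>
      le_mul_of_one_le_left (norm_nonneg _) (by simp)

theorem khat_eq_first_step (h : MeanHittingSummable B) (i j : Fin k) (X : Mn n) :
    khat B i j X = B i j * X * (B i j)ᴴ + ∑ l ∈ Finset.univ.erase i,
      (khat B i l (B l j * X * (B l j)ᴴ) +
        ∑' r : ℕ, pathSum B i l (r + 1) (B l j * X * (B l j)ᴴ)) := by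
  have hsplit : ∀ r : ℕ, ((r + 1 + 1 : ℕ) : ℂ) • pathSum B i j (r + 1 + 1) X =
      ∑ l ∈ Finset.univ.erase i,
        (((r + 1 : ℕ) : ℂ) • pathSum B i l (r + 1) (B l j * X * (B l j)ᴴ) +
          pathSum B i l (r + 1) (B l j * X * (B l j)ᴴ)) := by
    intro r
    rw [pathSum_succ_succ, Finset.smul_sum, Nat.cast_succ]
    simp only [add_smul, one_smul]
  rw [khat_eq_tsum, (h.summable_smul i j X).tsum_eq_zero_add, tsum_congr hsplit,
    Summable.tsum_finsetSum fun l _ => (h.summable_smul i l _).add (h.summable i l _)]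
  simp only [zero_add, Nat.cast_one, one_smul, pathSum_one, khat_eq_tsum]
  exact congrArg _ (Finset.sum_congr rfl fun l _ =>
    (h.summable_smul i l _).tsum_add (h.summable i l _))

theorem trace_khat_eq_first_step (h : MeanHittingSummable B) (i j : Fin k) (X : Mn n) :
    (khat B i j X).trace = (B i j * X * (B i j)ᴴ).trace + ∑ l ∈ Finset.univ.erase i,
      ((khat B i l (B l j * X * (B l j)ᴴ)).trace + hitSum B i l (B l j * X * (B l j)ᴴ)) := by
  rw [khat_eq_first_step h, trace_add, trace_sum]
  refine congrArg _ (Finset.sum_congr rfl fun l _ => ?_)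
  rw [trace_add, hitSum_eq_tsum, Matrix.trace_tsum (h.summable i l _)]

theorem IsOQW.sum_trace_conj (hB : IsOQW B) (j : Fin k) (X : Mn n) :
    ∑ l, (B l j * X * (B l j)ᴴ).trace = X.trace := by
  simp_rw [trace_mul_cycle (B _ j) X]
  rw [← trace_sum, ← Finset.sum_mul, hB j, one_mul]

end FirstStep

/-- First-step identity for mean hitting times (Lemma `very_usedlater`):
if all mean hitting/return time series converge absolutely and every hitting
probability is one, then for all sites `i, j` and every positive semidefinite `ρ`,
`Tr(k̂_{ij}(ρ)) = Tr(ρ) + ∑_{l ≠ i} Tr(k̂_{il}(B l j ρ (B l j)ᴴ))`; equivalently,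
with `L̂ := K̂ - (K̂ - D̂)Φ̂`, `Tr(L̂_{ij}(c ρ)) = c Tr(ρ)` for every `c ∈ ℝ`. -/
theorem mean_hitting_first_step {n k : ℕ}
    (B : Fin k → Fin k → Mn n) (hB : IsOQW B)
    (hSum : ∀ (i j : Fin k) (X : Mn n) (a b : Fin n),
      Summable fun r : ℕ => ((r + 1 : ℕ) : ℝ) *
        ‖(∑ x ∈ pathsSet k i j (r+1),
            pathProd B (r+1) x * X * (pathProd B (r+1) x)ᴴ) a b‖)
    (hHit : ∀ i l : Fin k, i ≠ l → ∀ σ : Mn n, σ.PosSemidef →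
      hitSum B i l σ = σ.trace) :
    (∀ (i j : Fin k) (ρ : Mn n), ρ.PosSemidef →
      (khat B i j ρ).trace =
        ρ.trace + ∑ l ∈ Finset.univ.erase i,
          (khat B i l (B l j * ρ * (B l j)ᴴ)).trace) ∧
    (∀ (i j : Fin k) (c : ℝ) (ρ : Mn n), ρ.PosSemidef →
      (khat B i j ((c : ℂ) • ρ)).trace -
        ∑ l ∈ Finset.univ.erase i,
          (khat B i l (B l j * ((c : ℂ) • ρ) * (B l j)ᴴ)).trace =
      (c : ℂ) * ρ.trace) := by
  have first_step : ∀ (i j : Fin k) (ρ : Mn n), ρ.PosSemidef →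
      (khat B i j ρ).trace =
        ρ.trace + ∑ l ∈ Finset.univ.erase i, (khat B i l (B l j * ρ * (B l j)ᴴ)).trace := by
    intro i j ρ hρ
    have hit : ∀ l ∈ Finset.univ.erase i,
        hitSum B i l (B l j * ρ * (B l j)ᴴ) = (B l j * ρ * (B l j)ᴴ).trace := fun l hl =>
      hHit i l (Finset.ne_of_mem_erase hl).symm _ (hρ.mul_mul_conjTranspose_same _)
    rw [trace_khat_eq_first_step hSum, Finset.sum_congr rfl fun l hl => by rw [hit l hl],
      Finset.sum_add_distrib, ← hB.sum_trace_conj j ρ,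
      ← Finset.add_sum_erase _ _ (Finset.mem_univ i)]
    ring
  refine ⟨first_step, fun i j c ρ hρ => ?_⟩
  simp_rw [mul_smul_comm, smul_mul_assoc, khat_smul, trace_smul, smul_eq_mul, ← Finset.mul_sum,
    first_step i j ρ hρ]
  ring

end
end

section
/- Let L = (1/√2)[[1,1],[0,0]], R = (1/√2)[[0,0],[1,−1]], and consider OQWs on the N-path with repelling borders and interior transitions L (left) and R (right). For the 3-path (sites 1,2,3; transitions: B_{21} = I from site 1, B_{12} = L and B_{32} = R from site 2), the mean hitting time of site 3 starting from site 1 with density ρ is k_{31}(ρ) = ∑_{r≥1} r·∑_{C∈π(3←1;r)} Tr(C ρ Cᴴ) = 4 + 4·Re(ρ_{12}). For the 4-path (sites 1,2,3,4; transitions: B_{21} = I from site 1, B_{12} = L and B_{32} = R from site 2, B_{23} = L and B_{43} = R from site 3), the mean hitting time of site 4 from site 1 is k_{41}(ρ) = 9 + 4·Re(ρ_{12}). -/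
open Matrix
open scoped ComplexOrder

noncomputable section

/-- `L = (1/√2) [[1,1],[0,0]]`. -/
def Lhad : Mn 2 := ((Real.sqrt 2 : ℂ))⁻¹ • !![1, 1; 0, 0]

/-- `R = (1/√2) [[0,0],[1,-1]]`. -/
def Rhad : Mn 2 := ((Real.sqrt 2 : ℂ))⁻¹ • !![0, 0; 1, -1]

/-- Transition matrices for the 3-path with repelling borders:
`B_{21} = I` from site 1, `B_{12} = L` and `B_{32} = R` from site 2;
unlisted transitions are zero.  (Sites 1,2,3 are indexed by `0,1,2`.) -/
def B3 : Fin 3 → Fin 3 → Mn 2 := fun i j =>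
  if i = 1 ∧ j = 0 then 1
  else if i = 0 ∧ j = 1 then Lhad
  else if i = 2 ∧ j = 1 then Rhad
  else 0

/-- Transition matrices for the 4-path: `B_{21} = I` from site 1, `B_{12} = L` and
`B_{32} = R` from site 2, `B_{23} = L` and `B_{43} = R` from site 3; unlisted
transitions are zero.  (Sites 1,2,3,4 are indexed by `0,1,2,3`.) -/
def B4 : Fin 4 → Fin 4 → Mn 2 := fun i j =>
  if i = 1 ∧ j = 0 then 1
  else if i = 0 ∧ j = 1 then Lhad
  else if i = 2 ∧ j = 1 then Rhad
  else if i = 1 ∧ j = 2 then Lhad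
  else if i = 3 ∧ j = 2 then Rhad
  else 0

/-!
The sum of `C ρ Cᴴ` over `π(i ← j; r)` is the state at site `i` after `r` steps of the walk
`μ ↦ (i ↦ ∑ⱼ B i j μⱼ (B i j)ᴴ)` started from `ρ` at `j`: no transition leaves the target `i`,
so every path through `i` before time `r` contributes zero.

Conjugation by `L` (resp. `R`) sends any `X` to a multiple of `E₁₁` (resp. `E₂₂`) of weight
`(X₁₁ + X₁₂ + X₂₁ + X₂₂)/2` (resp. `(X₁₁ - X₁₂ - X₂₁ + X₂₂)/2`), so after the first step the walk
is classical. With `u`, `v` the two weights of `ρ`, the target of the 3-path is reached at time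
`2` with probability `v` and at time `2m + 4` with probability `u / 2^(m+1)`; that of the 4-path
at time `3` with probability `v / 2` and at time `2m + 5` with probability `w (3/4)^m / 4`, where
`w = u + v / 2`. The arithmetico-geometric series sum to `6u + 2v` and `11u + 7v`, and
`u, v = (1 ± 2 Re ρ₁₂) / 2` for a density matrix. Bipartiteness of the paths kills the hitting
probabilities of the wrong parity.
-/

def oqwStep {n k : ℕ} (B : Fin k → Fin k → Mn n) (μ : Fin k → Mn n) : Fin k → Mn n :=
  fun i => ∑ j, B i j * μ j * (B i j)ᴴ

def occupationProb {n k : ℕ} (B : Fin k → Fin k → Mn n) (i j : Fin k) (ρ : Mn n) (r : ℕ) : ℂ :=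
  ((oqwStep B)^[r] (Pi.single j ρ) i).trace

section Paths

variable {n k : ℕ} (B : Fin k → Fin k → Mn n)

theorem pathProd_snoc {r : ℕ} (y : Fin (r+1) → Fin k) (m : Fin k) :
    pathProd B (r+1) (Fin.snoc y m) = B m (y (Fin.last r)) * pathProd B r y := by
  simp [pathProd]

theorem pathProd_eq_zero_of_transition_eq_zero :
    ∀ {r : ℕ} (x : Fin (r+1) → Fin k) (s : Fin r),
      B (x s.succ) (x s.castSucc) = 0 → pathProd B r x = 0
  | r+1, x, s, h => by
    rw [pathProd]
    rcases Fin.eq_castSucc_or_eq_last s with ⟨s, rfl⟩ | rfl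
    · rw [pathProd_eq_zero_of_transition_eq_zero (fun t => x t.castSucc) s (by simpa using h),
        mul_zero]
    · rw [← Fin.succ_last, h, zero_mul]

theorem sum_pathProd_conj_eq_iterate (μ : Fin k → Mn n) :
    ∀ (r : ℕ) (i : Fin k),
      ∑ x : Fin (r+1) → Fin k with x (Fin.last r) = i,
        pathProd B r x * μ (x 0) * (pathProd B r x)ᴴ = (oqwStep B)^[r] μ i
  | 0, i => by
    rw [Finset.sum_filter, ← (Equiv.funUnique (Fin 1) (Fin k)).symm.sum_comp]
    simp [pathProd]
  | r+1, i => by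
    set T : (Fin (r+1) → Fin k) → Mn n := fun y => pathProd B r y * μ (y 0) * (pathProd B r y)ᴴ
    calc ∑ x : Fin (r+2) → Fin k with x (Fin.last (r+1)) = i,
          pathProd B (r+1) x * μ (x 0) * (pathProd B (r+1) x)ᴴ
        = ∑ y : Fin (r+1) → Fin k, B i (y (Fin.last r)) * T y * (B i (y (Fin.last r)))ᴴ := by
          rw [Finset.sum_filter, ← (Fin.snocEquiv fun _ => Fin k).sum_comp, Fintype.sum_prod_type,
            Finset.sum_comm]
          refine Finset.sum_congr rfl fun y _ => ?_
          simp [Fin.snocEquiv, pathProd_snoc, T, Matrix.conjTranspose_mul, Matrix.mul_assoc]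
      _ = ∑ m, ∑ y : Fin (r+1) → Fin k with y (Fin.last r) = m, B i m * T y * (B i m)ᴴ := by
          rw [← Finset.sum_fiberwise Finset.univ (fun y => y (Fin.last r))]
          refine Finset.sum_congr rfl fun m _ => Finset.sum_congr rfl fun y hy => ?_
          rw [(Finset.mem_filter.mp hy).2]
      _ = (oqwStep B)^[r+1] μ i := by
          simp_rw [Function.iterate_succ_apply', oqwStep, ← sum_pathProd_conj_eq_iterate μ r,
            Finset.mul_sum, Finset.sum_mul, T]

theorem sum_pathsSet_trace_eq_occupationProb {i : Fin k} (hi : ∀ m, B m i = 0) (j : Fin k)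
    (ρ : Mn n) (r : ℕ) :
    ∑ x ∈ pathsSet k i j r, (pathProd B r x * ρ * (pathProd B r x)ᴴ).trace =
      occupationProb B i j ρ r := by
  rw [occupationProb, ← sum_pathProd_conj_eq_iterate, ← Matrix.trace_sum]
  refine congrArg Matrix.trace ?_
  calc ∑ x ∈ pathsSet k i j r, pathProd B r x * ρ * (pathProd B r x)ᴴ
      = ∑ x ∈ pathsSet k i j r,
          pathProd B r x * (Pi.single j ρ : Fin k → Mn n) (x 0) * (pathProd B r x)ᴴ :=
        Finset.sum_congr rfl fun x hx => by rw [(Finset.mem_filter.mp hx).2.1, Pi.single_eq_same]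
    _ = ∑ x : Fin (r+1) → Fin k with x (Fin.last r) = i,
          pathProd B r x * (Pi.single j ρ : Fin k → Mn n) (x 0) * (pathProd B r x)ᴴ := by
      refine Finset.sum_subset (fun x hx => ?_) fun x hx hxi => ?_
      · simp only [pathsSet, Finset.mem_filter] at hx ⊢
        exact ⟨Finset.mem_univ x, hx.2.2.1⟩
      · simp only [pathsSet, Finset.mem_filter, Finset.mem_univ, true_and] at hx hxi
        by_cases hj : x 0 = j
        · push Not at hxi
          obtain ⟨s, hs0, hsr, hxs⟩ := hxi hj hx
          obtain ⟨s, rfl⟩ := Fin.exists_castSucc_eq.mpr hsr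
          rw [pathProd_eq_zero_of_transition_eq_zero B x s (by rw [hxs, hi]), zero_mul, zero_mul]
        · rw [Pi.single_eq_of_ne hj, mul_zero, zero_mul]

end Paths

theorem iterate_oqwStep_single_eq_zero_of_parity {n k : ℕ} {B : Fin k → Fin k → Mn n}
    (hB : ∀ i j : Fin k, ((i : ℕ) + j) % 2 = 0 → B i j = 0) (j : Fin k) (ρ : Mn n) :
    ∀ (r : ℕ) (i : Fin k), ((i : ℕ) + j + r) % 2 = 1 → (oqwStep B)^[r] (Pi.single j ρ) i = 0
  | 0, i, h => by
    rw [Function.iterate_zero_apply, Pi.single_eq_of_ne]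
    rintro rfl
    omega
  | r+1, i, h => by
    rw [Function.iterate_succ_apply', oqwStep]
    refine Finset.sum_eq_zero fun m _ => ?_
    rcases Nat.mod_two_eq_zero_or_one ((i : ℕ) + m) with hm | hm
    · rw [hB i m hm, zero_mul, zero_mul]
    · rw [iterate_oqwStep_single_eq_zero_of_parity hB j ρ r m (by omega), mul_zero, zero_mul]

theorem hasSum_affine_mul_geometric {𝕜 : Type*} [NormedField 𝕜] {x : 𝕜} (hx : ‖x‖ < 1)
    (a b : 𝕜) :
    HasSum (fun m : ℕ => (a * m + b) * x ^ m) (a * (x / (1 - x) ^ 2) + b * (1 - x)⁻¹) := by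
  have h := ((hasSum_coe_mul_geometric_of_norm_lt_one hx).mul_left a).add
    ((hasSum_geometric_of_norm_lt_one hx).mul_left b)
  simpa only [add_mul, mul_assoc] using h

def lWeight (X : Mn 2) : ℂ := (X 0 0 + X 0 1 + X 1 0 + X 1 1) / 2

def rWeight (X : Mn 2) : ℂ := (X 0 0 - X 0 1 - X 1 0 + X 1 1) / 2

theorem inv_sqrt_two_smul_mul_mul_conjTranspose {n : ℕ} (M X : Mn n) :
    ((Real.sqrt 2 : ℂ)⁻¹ • M) * X * ((Real.sqrt 2 : ℂ)⁻¹ • M)ᴴ = (1 / 2 : ℂ) • (M * X * Mᴴ) := by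
  have h : (Real.sqrt 2 : ℂ)⁻¹ * star (Real.sqrt 2 : ℂ)⁻¹ = 1 / 2 := by
    rw [star_inv₀, Complex.star_def, Complex.conj_ofReal, ← mul_inv, ← Complex.ofReal_mul,
      Real.mul_self_sqrt zero_le_two]
    norm_num
  rw [Matrix.conjTranspose_smul, Matrix.smul_mul, Matrix.mul_smul, Matrix.smul_mul, smul_smul,
    mul_comm (star _), h]

theorem Lhad_mul_mul_conjTranspose (X : Mn 2) :
    Lhad * X * Lhadᴴ = Matrix.single 0 0 (lWeight X) := by
  rw [Lhad, inv_sqrt_two_smul_mul_mul_conjTranspose]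
  ext i j
  fin_cases i <;> fin_cases j <;>
    simp [lWeight, Matrix.mul_apply, Matrix.vecMul, dotProduct, Fin.sum_univ_two]
  ring

theorem Rhad_mul_mul_conjTranspose (X : Mn 2) :
    Rhad * X * Rhadᴴ = Matrix.single 1 1 (rWeight X) := by
  rw [Rhad, inv_sqrt_two_smul_mul_mul_conjTranspose]
  ext i j
  fin_cases i <;> fin_cases j <;>
    simp [rWeight, Matrix.mul_apply, Matrix.vecMul, dotProduct, Fin.sum_univ_two]
  ring

@[simp]
theorem lWeight_single_zero (c : ℂ) : lWeight (Matrix.single 0 0 c) = c / 2 := by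
  simp [lWeight]

@[simp]
theorem lWeight_single_one (c : ℂ) : lWeight (Matrix.single 1 1 c) = c / 2 := by
  simp [lWeight]

@[simp]
theorem rWeight_single_zero (c : ℂ) : rWeight (Matrix.single 0 0 c) = c / 2 := by
  simp [rWeight]

@[simp]
theorem rWeight_single_one (c : ℂ) : rWeight (Matrix.single 1 1 c) = c / 2 := by
  simp [rWeight]

theorem apply_zero_one_add_apply_one_zero_of_isHermitian {ρ : Mn 2} (hρ : ρ.IsHermitian) :
    ρ 0 1 + ρ 1 0 = 2 * (ρ 0 1).re := by
  rw [← hρ.apply 1 0]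
  exact_mod_cast Complex.add_conj (ρ 0 1)

theorem lWeight_eq_of_isHermitian {ρ : Mn 2} (hρ : ρ.IsHermitian) (htr : ρ.trace = 1) :
    lWeight ρ = ((1 + 2 * (ρ 0 1).re : ℝ) : ℂ) / 2 := by
  rw [Matrix.trace_fin_two] at htr
  rw [lWeight]
  push_cast
  linear_combination (htr + apply_zero_one_add_apply_one_zero_of_isHermitian hρ) / 2

theorem rWeight_eq_of_isHermitian {ρ : Mn 2} (hρ : ρ.IsHermitian) (htr : ρ.trace = 1) :
    rWeight ρ = ((1 - 2 * (ρ 0 1).re : ℝ) : ℂ) / 2 := by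
  rw [Matrix.trace_fin_two] at htr
  rw [rWeight]
  push_cast
  linear_combination (htr - apply_zero_one_add_apply_one_zero_of_isHermitian hρ) / 2

theorem oqwStep_B3 (μ : Fin 3 → Mn 2) :
    oqwStep B3 μ = ![Lhad * μ 1 * Lhadᴴ, μ 0, Rhad * μ 1 * Rhadᴴ] := by
  funext i
  fin_cases i <;> simp [oqwStep, B3]

theorem oqwStep_B4 (μ : Fin 4 → Mn 2) :
    oqwStep B4 μ = ![Lhad * μ 1 * Lhadᴴ, μ 0 + Lhad * μ 2 * Lhadᴴ, Rhad * μ 1 * Rhadᴴ,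
      Rhad * μ 2 * Rhadᴴ] := by
  funext i
  fin_cases i <;> simp [oqwStep, B4, Fin.sum_univ_four]

theorem iterate_oqwStep_B3_add_two_apply_one (μ : Fin 3 → Mn 2) (t : ℕ) :
    (oqwStep B3)^[t+2] μ 1 = Matrix.single 0 0 (lWeight ((oqwStep B3)^[t] μ 1)) := by
  simp [Function.iterate_succ_apply', oqwStep_B3, Lhad_mul_mul_conjTranspose]

theorem trace_iterate_oqwStep_B3_succ_apply_two (μ : Fin 3 → Mn 2) (t : ℕ) :
    ((oqwStep B3)^[t+1] μ 2).trace = rWeight ((oqwStep B3)^[t] μ 1) := by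
  simp [Function.iterate_succ_apply', oqwStep_B3, Rhad_mul_mul_conjTranspose]

theorem iterate_oqwStep_B3_odd_apply_one (ρ : Mn 2) (m : ℕ) :
    (oqwStep B3)^[2*m+3] (Pi.single 0 ρ) 1 = Matrix.single 0 0 (lWeight ρ / 2 ^ m) := by
  induction m with
  | zero => simp [iterate_oqwStep_B3_add_two_apply_one, oqwStep_B3]
  | succ m ih =>
    rw [show 2 * (m+1) + 3 = (2*m+3) + 2 by ring, iterate_oqwStep_B3_add_two_apply_one, ih,
      lWeight_single_zero, pow_succ, div_div]

theorem hasSum_occupationProb_B3 (ρ : Mn 2) :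
    HasSum (fun r : ℕ => ((r + 1 : ℕ) : ℂ) * occupationProb B3 2 0 ρ (r+1))
      (6 * lWeight ρ + 2 * rWeight ρ) := by
  have hB3 : ∀ i j : Fin 3, ((i : ℕ) + j) % 2 = 0 → B3 i j = 0 := by
    intro i j
    fin_cases i <;> fin_cases j <;> simp [B3]
  have heven : HasSum (fun m : ℕ => ((2*m + 1 : ℕ) : ℂ) * occupationProb B3 2 0 ρ (2*m + 1)) 0 := by
    refine hasSum_zero.congr_fun fun m => ?_
    rw [occupationProb, iterate_oqwStep_single_eq_zero_of_parity hB3 0 ρ _ 2 (by simp),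
      Matrix.trace_zero, mul_zero]
  have htail : HasSum (fun m : ℕ => ((2*(m+1) + 1 + 1 : ℕ) : ℂ) *
      occupationProb B3 2 0 ρ (2*(m+1) + 1 + 1)) (6 * lWeight ρ) := by
    have h := hasSum_affine_mul_geometric (x := (1 / 2 : ℂ)) (by norm_num) (lWeight ρ)
      (2 * lWeight ρ)
    rw [show lWeight ρ * (1 / 2 / (1 - 1 / 2) ^ 2) + 2 * lWeight ρ * (1 - 1 / 2)⁻¹ =
      6 * lWeight ρ by ring] at h
    refine h.congr_fun fun m => ?_
    rw [occupationProb, show 2*(m+1) + 1 + 1 = (2*m + 3) + 1 by ring,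
      trace_iterate_oqwStep_B3_succ_apply_two, iterate_oqwStep_B3_odd_apply_one,
      rWeight_single_zero]
    push_cast
    rw [one_div, inv_pow]
    field_simp
    ring
  have hodd : HasSum (fun m : ℕ => ((2*m + 1 + 1 : ℕ) : ℂ) * occupationProb B3 2 0 ρ (2*m + 1 + 1))
      (6 * lWeight ρ + 2 * rWeight ρ) := by
    have hfirst : occupationProb B3 2 0 ρ 2 = rWeight ρ := by
      simp [occupationProb, oqwStep_B3, Rhad_mul_mul_conjTranspose]
    rw [← hasSum_nat_add_iff' 1, Finset.sum_range_one, show 2 * 0 + 1 + 1 = 2 from rfl, hfirst]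
    simpa using htail
  simpa using HasSum.even_add_odd
    (f := fun r : ℕ => ((r + 1 : ℕ) : ℂ) * occupationProb B3 2 0 ρ (r+1)) heven hodd

theorem iterate_oqwStep_B4_add_two_apply_one (μ : Fin 4 → Mn 2) (t : ℕ) :
    (oqwStep B4)^[t+2] μ 1 = Matrix.single 0 0
      (lWeight ((oqwStep B4)^[t] μ 1) + rWeight ((oqwStep B4)^[t] μ 1) / 2) := by
  simp [Function.iterate_succ_apply', oqwStep_B4, Lhad_mul_mul_conjTranspose,
    Rhad_mul_mul_conjTranspose, Matrix.single_add]

theorem trace_iterate_oqwStep_B4_add_two_apply_three (μ : Fin 4 → Mn 2) (t : ℕ) :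
    ((oqwStep B4)^[t+2] μ 3).trace = rWeight ((oqwStep B4)^[t] μ 1) / 2 := by
  simp [Function.iterate_succ_apply', oqwStep_B4, Rhad_mul_mul_conjTranspose]

theorem iterate_oqwStep_B4_odd_apply_one (ρ : Mn 2) (m : ℕ) :
    (oqwStep B4)^[2*m+3] (Pi.single 0 ρ) 1 =
      Matrix.single 0 0 ((lWeight ρ + rWeight ρ / 2) * (3 / 4) ^ m) := by
  induction m with
  | zero => simp [iterate_oqwStep_B4_add_two_apply_one, oqwStep_B4]
  | succ m ih =>
    rw [show 2 * (m+1) + 3 = (2*m+3) + 2 by ring, iterate_oqwStep_B4_add_two_apply_one, ih,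
      lWeight_single_zero, rWeight_single_zero]
    ring_nf

theorem hasSum_occupationProb_B4 (ρ : Mn 2) :
    HasSum (fun r : ℕ => ((r + 1 : ℕ) : ℂ) * occupationProb B4 3 0 ρ (r+1))
      (11 * lWeight ρ + 7 * rWeight ρ) := by
  have hB4 : ∀ i j : Fin 4, ((i : ℕ) + j) % 2 = 0 → B4 i j = 0 := by
    intro i j
    fin_cases i <;> fin_cases j <;> simp [B4]
  have hodd : HasSum (fun m : ℕ => ((2*m + 1 + 1 : ℕ) : ℂ) * occupationProb B4 3 0 ρ (2*m + 1 + 1))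
      0 := by
    refine hasSum_zero.congr_fun fun m => ?_
    rw [occupationProb, iterate_oqwStep_single_eq_zero_of_parity hB4 0 ρ _ 3 (by simp; omega),
      Matrix.trace_zero, mul_zero]
  have htail : HasSum (fun m : ℕ => ((2*(m+2) + 1 : ℕ) : ℂ) * occupationProb B4 3 0 ρ (2*(m+2) + 1))
      (11 * (lWeight ρ + rWeight ρ / 2)) := by
    set w := lWeight ρ + rWeight ρ / 2
    have h := hasSum_affine_mul_geometric (x := (3 / 4 : ℂ)) (by norm_num) (w / 2) (5 * w / 4)
    rw [show w / 2 * (3 / 4 / (1 - 3 / 4) ^ 2) + 5 * w / 4 * (1 - 3 / 4)⁻¹ = 11 * w by ring] at h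
    refine h.congr_fun fun m => ?_
    rw [occupationProb, show 2*(m+2) + 1 = (2*m + 3) + 2 by ring,
      trace_iterate_oqwStep_B4_add_two_apply_three, iterate_oqwStep_B4_odd_apply_one,
      rWeight_single_zero]
    push_cast
    ring
  have heven : HasSum (fun m : ℕ => ((2*m + 1 : ℕ) : ℂ) * occupationProb B4 3 0 ρ (2*m + 1))
      (11 * lWeight ρ + 7 * rWeight ρ) := by
    have hone : occupationProb B4 3 0 ρ 1 = 0 := by
      simp [occupationProb, oqwStep_B4]
    have hthree : occupationProb B4 3 0 ρ 3 = rWeight ρ / 2 := by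
      simp [occupationProb, oqwStep_B4, Rhad_mul_mul_conjTranspose]
    rw [← hasSum_nat_add_iff' 2, Finset.sum_range_succ, Finset.sum_range_one,
      show 2 * 0 + 1 = 1 from rfl, show 2 * 1 + 1 = 3 from rfl, hone, hthree]
    rwa [show 11 * lWeight ρ + 7 * rWeight ρ - (((1 : ℕ) : ℂ) * 0 + ((3 : ℕ) : ℂ) * (rWeight ρ / 2))
      = 11 * (lWeight ρ + rWeight ρ / 2) by push_cast; ring]
  simpa using HasSum.even_add_odd
    (f := fun r : ℕ => ((r + 1 : ℕ) : ℂ) * occupationProb B4 3 0 ρ (r+1)) heven hodd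

/-- Mean hitting times on the 3-path and the 4-path for the split-Hadamard OQW:
`k_{31}(ρ) = 4 + 4 Re(ρ_{12})` and `k_{41}(ρ) = 9 + 4 Re(ρ_{12})` for every
density matrix `ρ`. -/
theorem mean_hitting_time_path_hadamard (ρ : Mn 2)
    (hpos : ρ.PosSemidef) (htr : ρ.trace = 1) :
    (∑' r : ℕ, ((r + 1 : ℕ) : ℂ) * ∑ x ∈ pathsSet 3 2 0 (r+1),
        (pathProd B3 (r+1) x * ρ * (pathProd B3 (r+1) x)ᴴ).trace =
      ((4 + 4 * (ρ 0 1).re : ℝ) : ℂ)) ∧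
    (∑' r : ℕ, ((r + 1 : ℕ) : ℂ) * ∑ x ∈ pathsSet 4 3 0 (r+1),
        (pathProd B4 (r+1) x * ρ * (pathProd B4 (r+1) x)ᴴ).trace =
      ((9 + 4 * (ρ 0 1).re : ℝ) : ℂ)) := by
  have hB3 : ∀ m, B3 m 2 = 0 := by
    intro m
    fin_cases m <;> simp [B3]
  have hB4 : ∀ m, B4 m 3 = 0 := by
    intro m
    fin_cases m <;> simp [B4]
  simp_rw [sum_pathsSet_trace_eq_occupationProb B3 hB3, sum_pathsSet_trace_eq_occupationProb B4 hB4]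
  rw [(hasSum_occupationProb_B3 ρ).tsum_eq, (hasSum_occupationProb_B4 ρ).tsum_eq,
    lWeight_eq_of_isHermitian hpos.1 htr, rWeight_eq_of_isHermitian hpos.1 htr]
  constructor <;> push_cast <;> ring

end
end

section
/- Let x, y, z, w ∈ ℂ, L = [[x, y],[0, 0]] and R = [[0, 0],[z, w]] in M_2(ℂ), and let ρ ∈ M_2(ℂ) be Hermitian with entries ρ_{11}, ρ_{12}, ρ_{22}. Then for every n ≥ 1: Tr(L^n ρ (Lᴴ)^n) = |x|^{2(n−1)}·(ρ_{11}|x|² + 2·Re(ρ_{12}·x·conj(y)) + ρ_{22}|y|²) and Tr(R^n ρ (Rᴴ)^n) = |w|^{2(n−1)}·(ρ_{11}|z|² + 2·Re(ρ_{12}·z·conj(w)) + ρ_{22}|w|²). -/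
/-!
Both `L = !![x, y; 0, 0]` and `R = !![0, 0; z, w]` have rank one and satisfy `L * L = x • L`,
`R * R = w • R`, so `Lⁿ = xⁿ⁻¹ • L` and `Rⁿ = wⁿ⁻¹ • R`. The scalar leaves the trace as
`|x|^{2(n-1)}` (resp. `|w|^{2(n-1)}`), and `Tr(L ρ Lᴴ)` is the Hermitian form of `ρ` evaluated
on the nonzero row of `L`, in which the two off-diagonal terms are complex conjugates.
-/

open Matrix

theorem pow_succ_eq_pow_smul_of_mul_self_eq_smul {R M : Type*} [Monoid R] [Monoid M]
    [MulAction R M] [IsScalarTower R M M] {A : M} {a : R} (hA : A * A = a • A) (n : ℕ) :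
    A ^ (n + 1) = a ^ n • A := by
  induction n with
  | zero => simp
  | succ n ih => rw [pow_succ, ih, smul_mul_assoc, hA, smul_smul, ← pow_succ]

theorem Matrix.trace_smul_mul_mul_conjTranspose_smul {n R : Type*} [Fintype n] [CommSemiring R]
    [StarRing R] (c : R) (A B : Matrix n n R) :
    ((c • A) * B * (c • A)ᴴ).trace = c * star c * (A * B * Aᴴ).trace := by
  rw [conjTranspose_smul, smul_mul_assoc, smul_mul_assoc, mul_smul_comm, trace_smul, trace_smul,
    smul_eq_mul, smul_eq_mul, ← mul_assoc, mul_right_comm]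

theorem Matrix.trace_pow_mul_mul_conjTranspose_pow_of_mul_self_eq_smul {n : Type*} [Fintype n]
    [DecidableEq n] {A : Matrix n n ℂ} {c : ℂ} (hA : A * A = c • A) (B : Matrix n n ℂ) (m : ℕ) :
    (A ^ (m + 1) * B * Aᴴ ^ (m + 1)).trace = ((‖c‖ ^ (2 * m) : ℝ) : ℂ) * (A * B * Aᴴ).trace := by
  rw [← conjTranspose_pow, pow_succ_eq_pow_smul_of_mul_self_eq_smul hA,
    trace_smul_mul_mul_conjTranspose_smul, Complex.star_def, Complex.mul_conj', norm_pow, pow_mul']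
  push_cast
  ring

theorem Matrix.IsHermitian.form_fin_two {ρ : Matrix (Fin 2) (Fin 2) ℂ} (hρ : ρ.IsHermitian)
    (a b : ℂ) :
    ρ 0 0 * (a * starRingEnd ℂ a) + ρ 0 1 * a * starRingEnd ℂ b + ρ 1 0 * b * starRingEnd ℂ a
        + ρ 1 1 * (b * starRingEnd ℂ b) =
      ρ 0 0 * ((‖a‖ ^ 2 : ℝ) : ℂ) + 2 * (((ρ 0 1 * a * starRingEnd ℂ b).re : ℝ) : ℂ)
        + ρ 1 1 * ((‖b‖ ^ 2 : ℝ) : ℂ) := by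
  have hρ10 : ρ 1 0 = starRingEnd ℂ (ρ 0 1) := (hρ.apply 1 0).symm
  have hcross : ρ 0 1 * a * starRingEnd ℂ b + ρ 1 0 * b * starRingEnd ℂ a =
      (ρ 0 1 * a * starRingEnd ℂ b) + starRingEnd ℂ (ρ 0 1 * a * starRingEnd ℂ b) := by
    simp only [hρ10, map_mul, Complex.conj_conj]
    ring
  rw [add_assoc (_ + _), add_assoc, ← add_assoc (ρ 0 1 * a * _), hcross, Complex.add_conj,
    Complex.mul_conj', Complex.mul_conj']
  push_cast
  ring

theorem trace_upperRow_mul_mul_conjTranspose {ρ : Matrix (Fin 2) (Fin 2) ℂ}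
    (hρ : ρ.IsHermitian) (x y : ℂ) :
    (!![x, y; 0, 0] * ρ * (!![x, y; 0, 0])ᴴ).trace =
      ρ 0 0 * ((‖x‖ ^ 2 : ℝ) : ℂ) + 2 * (((ρ 0 1 * x * starRingEnd ℂ y).re : ℝ) : ℂ)
        + ρ 1 1 * ((‖y‖ ^ 2 : ℝ) : ℂ) := by
  rw [← hρ.form_fin_two]
  simp only [trace_fin_two, mul_apply, Fin.sum_univ_two, conjTranspose_apply, of_apply, cons_val',
    cons_val_zero, cons_val_one, cons_val_fin_one, RCLike.star_def, map_zero]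
  ring

theorem trace_lowerRow_mul_mul_conjTranspose {ρ : Matrix (Fin 2) (Fin 2) ℂ}
    (hρ : ρ.IsHermitian) (z w : ℂ) :
    (!![0, 0; z, w] * ρ * (!![0, 0; z, w])ᴴ).trace =
      ρ 0 0 * ((‖z‖ ^ 2 : ℝ) : ℂ) + 2 * (((ρ 0 1 * z * starRingEnd ℂ w).re : ℝ) : ℂ)
        + ρ 1 1 * ((‖w‖ ^ 2 : ℝ) : ℂ) := by
  rw [← hρ.form_fin_two]
  simp only [trace_fin_two, mul_apply, Fin.sum_univ_two, conjTranspose_apply, of_apply, cons_val',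
    cons_val_zero, cons_val_one, cons_val_fin_one, RCLike.star_def, map_zero]
  ring

/-- Trace pattern for powers of the row matrices `L = [[x,y],[0,0]]` and
`R = [[0,0],[z,w]]`: for every Hermitian `ρ` and every `n ≥ 1`,
`Tr(Lⁿ ρ (Lᴴ)ⁿ) = |x|^{2(n-1)} (ρ_{11}|x|² + 2 Re(ρ_{12} x ȳ) + ρ_{22}|y|²)` and
`Tr(Rⁿ ρ (Rᴴ)ⁿ) = |w|^{2(n-1)} (ρ_{11}|z|² + 2 Re(ρ_{12} z w̄) + ρ_{22}|w|²)`. -/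
theorem row_matrix_power_trace (x y z w : ℂ)
    (ρ : Matrix (Fin 2) (Fin 2) ℂ) (hherm : ρ.IsHermitian) :
    ∀ n : ℕ, 1 ≤ n →
      ((!![x, y; 0, 0] : Matrix (Fin 2) (Fin 2) ℂ) ^ n * ρ *
          ((!![x, y; 0, 0] : Matrix (Fin 2) (Fin 2) ℂ)ᴴ) ^ n).trace =
        ((‖x‖ ^ (2 * (n - 1)) : ℝ) : ℂ) *
          (ρ 0 0 * ((‖x‖ ^ 2 : ℝ) : ℂ) +
            2 * (((ρ 0 1 * x * starRingEnd ℂ y).re : ℝ) : ℂ) +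
            ρ 1 1 * ((‖y‖ ^ 2 : ℝ) : ℂ)) ∧
      ((!![0, 0; z, w] : Matrix (Fin 2) (Fin 2) ℂ) ^ n * ρ *
          ((!![0, 0; z, w] : Matrix (Fin 2) (Fin 2) ℂ)ᴴ) ^ n).trace =
        ((‖w‖ ^ (2 * (n - 1)) : ℝ) : ℂ) *
          (ρ 0 0 * ((‖z‖ ^ 2 : ℝ) : ℂ) +
            2 * (((ρ 0 1 * z * starRingEnd ℂ w).re : ℝ) : ℂ) +
            ρ 1 1 * ((‖w‖ ^ 2 : ℝ) : ℂ)) := by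
  intro n hn
  obtain ⟨m, rfl⟩ := Nat.exists_eq_add_of_le' hn
  have hL : !![x, y; 0, 0] * !![x, y; 0, 0] = x • !![x, y; 0, 0] := by
    ext i j; fin_cases i <;> fin_cases j <;> simp [mul_apply]
  have hR : !![0, 0; z, w] * !![0, 0; z, w] = w • !![0, 0; z, w] := by
    ext i j; fin_cases i <;> fin_cases j <;> simp [mul_apply, mul_comm]
  rw [Nat.add_sub_cancel, trace_pow_mul_mul_conjTranspose_pow_of_mul_self_eq_smul hL,
    trace_pow_mul_mul_conjTranspose_pow_of_mul_self_eq_smul hR,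
    trace_upperRow_mul_mul_conjTranspose hherm, trace_lowerRow_mul_mul_conjTranspose hherm]
  exact ⟨rfl, rfl⟩
end
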